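/- arXiv:2512.00904 — 2 statements merged into one kernel-verified Lean document; each statement's English description precedes it below -/
import Mathlib

section
/- (Sinkhorn scaling, as used for the transport plan t_{i,j} = a_i b_j exp(−c_{i,j}/ε)) Let K ∈ ℝ^{N×M} be a matrix with strictly positive entries, and let p ∈ ℝ^{N} and q ∈ ℝ^{M} be strictly positive vectors with ∑_{i=1}^{N} p_i = ∑_{j=1}^{M} q_j. Then there exist strictly positive vectors a ∈ ℝ^{N} and b ∈ ℝ^{M} such that the matrix T with entries t_{i,j} = a_i b_j k_{i,j} satisfies the prescribed marginals ∑_{j=1}^{M} t_{i,j} = p_i for every i and ∑_{i=1}^{N} t_{i,j} = q_j for every j. In particular, taking k_{i,j} = exp(−c_{i,j}/ε), p_i = 1/N and q_j = 1/M yields a plan of the form t_{i,j} = a_i b_j exp(−c_{i,j}/ε) lying in the transportation polytope Π(N,M). -/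
/-- The transportation polytope `Π(N,M)`: matrices in `ℝ^{N×M}` with nonnegative entries,
every row summing to `1/N` and every column summing to `1/M`. -/
def transportPolytope (N M : ℕ) : Set (Fin N → Fin M → ℝ) :=
  {T | (∀ i j, 0 ≤ T i j) ∧ (∀ i : Fin N, ∑ j : Fin M, T i j = 1 / N) ∧
       (∀ j : Fin M, ∑ i : Fin N, T i j = 1 / M)}

/-!
The scaling vectors are `a = exp u`, `b = exp v` for a minimiser `(u, v)` of the convex dual
`∑ᵢⱼ kᵢⱼ e^{uᵢ + vⱼ} - ⟨p, u⟩ - ⟨q, v⟩`, whose partial derivatives are exactly the marginal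
defects. Since `∑ p = ∑ q = P`, the linear part equals `∑ᵢⱼ wᵢⱼ (uᵢ + vⱼ)` with
`wᵢⱼ = pᵢ qⱼ / P > 0`, so the dual is `s ↦ ∑ᵢⱼ (kᵢⱼ e^{sᵢⱼ} - wᵢⱼ sᵢⱼ)` evaluated at
`sᵢⱼ = uᵢ + vⱼ`. Each summand is coercive on `ℝ`, hence so is the sum on `ℝ^{ι × κ}`, and it
attains its minimum on the closed subspace of matrices of the form `uᵢ + vⱼ`.
-/

open Filter Topology Real

theorem tendsto_mul_exp_sub_mul_cocompact {k w : ℝ} (hk : 0 < k) (hw : 0 < w) :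
    Tendsto (fun t => k * exp t - w * t) (cocompact ℝ) atTop := by
  rw [cocompact_eq_atBot_atTop, tendsto_sup]
  constructor
  · refine tendsto_atTop_mono (fun t => ?_) (tendsto_neg_atBot_atTop.const_mul_atTop hw)
    linarith [mul_pos hk (exp_pos t)]
  · set c := log (2 * w / k)
    have hline : ∀ t, 2 * w * (t - c + 1) ≤ k * exp t := fun t =>
      calc 2 * w * (t - c + 1) ≤ 2 * w * exp (t - c) := by gcongr; exact add_one_le_exp _
        _ = k * exp t := by rw [exp_sub, exp_log (by positivity)]; field_simp
    refine tendsto_atTop_mono (fun t => ?_)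
      (tendsto_atTop_add_const_right _ (2 * w * (1 - c)) (tendsto_id.const_mul_atTop hw))
    simp only [id]
    linarith [hline t]

section Separable

variable {α : Type*} [Fintype α]

theorem tendsto_sum_apply_cocompact {φ : α → ℝ → ℝ} (hc : ∀ a, Continuous (φ a))
    (hφ : ∀ a, Tendsto (φ a) (cocompact ℝ) atTop) :
    Tendsto (fun s : α → ℝ => ∑ a, φ a (s a)) (cocompact (α → ℝ)) atTop := by
  choose m hm using fun a => (hc a).exists_forall_le (hφ a)
  rw [← coprodᵢ_cocompact, Filter.coprodᵢ, tendsto_iSup]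
  intro a
  have hle : ∀ s : α → ℝ, φ a (s a) + (∑ b, φ b (m b) - φ a (m a)) ≤ ∑ b, φ b (s b) := by
    intro s
    have := Finset.single_le_sum (f := fun b => φ b (s b) - φ b (m b))
      (fun b _ => sub_nonneg.2 (hm b (s b))) (Finset.mem_univ a)
    simp only [Finset.sum_sub_distrib] at this
    linarith
  exact tendsto_atTop_mono hle (tendsto_atTop_add_const_right _ _ ((hφ a).comp tendsto_comap))

theorem exists_isMinOn_sum_apply {φ : α → ℝ → ℝ} (hc : ∀ a, Continuous (φ a))
    (hφ : ∀ a, Tendsto (φ a) (cocompact ℝ) atTop) (V : Submodule ℝ (α → ℝ)) :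
    ∃ y ∈ V, IsMinOn (fun s => ∑ a, φ a (s a)) V y :=
  (continuous_finsetSum _ fun a _ => (hc a).comp (continuous_apply a)).continuousOn.exists_isMinOn'
    V.closed_of_finiteDimensional V.zero_mem
    (((tendsto_sum_apply_cocompact hc hφ).eventually (eventually_ge_atTop _)).filter_mono
      inf_le_left)

theorem sum_mul_eq_zero_of_isMinOn {φ : α → ℝ → ℝ} {φ' : α → ℝ} {V : Submodule ℝ (α → ℝ)}
    {y δ : α → ℝ} (hmin : IsMinOn (fun s => ∑ a, φ a (s a)) V y) (hy : y ∈ V) (hδ : δ ∈ V)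
    (hφ' : ∀ a, HasDerivAt (φ a) (φ' a) (y a)) : ∑ a, φ' a * δ a = 0 := by
  have hline : HasDerivAt (fun t : ℝ => ∑ a, φ a ((y + t • δ) a)) (∑ a, φ' a * δ a) 0 := by
    refine HasDerivAt.fun_sum fun a _ => ?_
    have hlin : HasDerivAt (fun t : ℝ => y a + t * δ a) (δ a) 0 := by
      simpa using ((hasDerivAt_id (0 : ℝ)).mul_const (δ a)).const_add (y a)
    exact (hφ' a).comp_of_eq 0 hlin (by simp)
  refine IsLocalMin.hasDerivAt_eq_zero (Eventually.of_forall fun t => ?_) hline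
  simpa using hmin (V.add_mem hy (V.smul_mem t hδ))

end Separable

section Potentials

variable {ι κ : Type*} [Fintype ι] [Fintype κ]

variable (ι κ) in
def potentialSum : (ι → ℝ) × (κ → ℝ) →ₗ[ℝ] ι × κ → ℝ where
  toFun x ij := x.1 ij.1 + x.2 ij.2
  map_add' _ _ := by ext; simp only [Prod.fst_add, Prod.snd_add, Pi.add_apply]; ring
  map_smul' _ _ := by
    ext; simp only [Prod.smul_fst, Prod.smul_snd, Pi.smul_apply, smul_eq_mul, RingHom.id_apply]
    ring

theorem sum_row_col_eq_zero_of_isMinOn_range_potentialSum {φ : ι × κ → ℝ → ℝ}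
    {φ' : ι × κ → ℝ} {u : ι → ℝ} {v : κ → ℝ}
    (hmin : IsMinOn (fun s => ∑ x, φ x (s x)) (LinearMap.range (potentialSum ι κ))
      (potentialSum ι κ (u, v)))
    (hφ' : ∀ x, HasDerivAt (φ x) (φ' x) (u x.1 + v x.2)) :
    (∀ i, ∑ j, φ' (i, j) = 0) ∧ ∀ j, ∑ i, φ' (i, j) = 0 := by
  classical
  have hcrit : ∀ e d, ∑ x, φ' x * potentialSum ι κ (e, d) x = 0 := fun e d =>
    sum_mul_eq_zero_of_isMinOn hmin (LinearMap.mem_range_self _ _)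
      (LinearMap.mem_range_self _ _) hφ'
  refine ⟨fun i => ?_, fun j => ?_⟩
  · have := hcrit (Pi.single i 1) 0
    rw [Fintype.sum_prod_type] at this
    simpa only [potentialSum, LinearMap.coe_mk, AddHom.coe_mk, Pi.zero_apply, add_zero,
      Pi.single_apply, mul_ite, mul_one, mul_zero, ← Finset.ite_sum_zero, Finset.sum_ite_eq',
      Finset.mem_univ, if_true] using this
  · have := hcrit 0 (Pi.single j 1)
    rw [Fintype.sum_prod_type, Finset.sum_comm] at this
    simpa only [potentialSum, LinearMap.coe_mk, AddHom.coe_mk, Pi.zero_apply, zero_add,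
      Pi.single_apply, mul_ite, mul_one, mul_zero, ← Finset.ite_sum_zero, Finset.sum_ite_eq',
      Finset.mem_univ, if_true] using this

theorem exists_pos_scaling_marginals {K : ι → κ → ℝ} (hK : ∀ i j, 0 < K i j)
    {p : ι → ℝ} {q : κ → ℝ} (hp : ∀ i, 0 < p i) (hq : ∀ j, 0 < q j)
    (hpq : ∑ i, p i = ∑ j, q j) :
    ∃ (a : ι → ℝ) (b : κ → ℝ), (∀ i, 0 < a i) ∧ (∀ j, 0 < b j) ∧
      (∀ i, ∑ j, a i * b j * K i j = p i) ∧ (∀ j, ∑ i, a i * b j * K i j = q j) := by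
  set P := ∑ i, p i
  have hP_of_row : ι → 0 < P := fun i => Finset.sum_pos (fun i _ => hp i) ⟨i, Finset.mem_univ i⟩
  have hP_of_col : κ → 0 < P := fun j =>
    hpq ▸ Finset.sum_pos (fun j _ => hq j) ⟨j, Finset.mem_univ j⟩
  set w : ι × κ → ℝ := fun x => p x.1 * q x.2 / P
  have hw : ∀ x, 0 < w x := fun x => by
    have := hp x.1; have := hq x.2; have := hP_of_row x.1; positivity
  have hw_row : ∀ i, ∑ j, w (i, j) = p i := fun i => by
    simp only [w, ← Finset.sum_div, ← Finset.mul_sum, ← hpq]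
    exact mul_div_cancel_right₀ _ (hP_of_row i).ne'
  have hw_col : ∀ j, ∑ i, w (i, j) = q j := fun j => by
    simp only [w, ← Finset.sum_div, ← Finset.sum_mul]
    exact mul_div_cancel_left₀ _ (hP_of_col j).ne'
  obtain ⟨_, ⟨⟨u, v⟩, rfl⟩, hmin⟩ := exists_isMinOn_sum_apply
    (φ := fun x t => K x.1 x.2 * exp t - w x * t) (fun x => by fun_prop)
    (fun x => tendsto_mul_exp_sub_mul_cocompact (hK x.1 x.2) (hw x))
    (LinearMap.range (potentialSum ι κ))
  have hderiv : ∀ x t, HasDerivAt (fun t => K x.1 x.2 * exp t - w x * t)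
      (K x.1 x.2 * exp t - w x) t := fun x t => by
    simpa using ((hasDerivAt_exp t).const_mul (K x.1 x.2)).fun_sub
      ((hasDerivAt_id' t).const_mul (w x))
  obtain ⟨hrow, hcol⟩ :=
    sum_row_col_eq_zero_of_isMinOn_range_potentialSum hmin fun x => hderiv x (u x.1 + v x.2)
  refine ⟨fun i => exp (u i), fun j => exp (v j), fun i => exp_pos _, fun j => exp_pos _,
    fun i => ?_, fun j => ?_⟩
  · rw [← hw_row i, ← sub_eq_zero, ← Finset.sum_sub_distrib, ← hrow i]
    simp only [exp_add, mul_comm]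
  · rw [← hw_col j, ← sub_eq_zero, ← Finset.sum_sub_distrib, ← hcol j]
    simp only [exp_add, mul_comm]

end Potentials

theorem sinkhorn_scaling_general (N M : ℕ) (hN : 0 < N) (hM : 0 < M)
    (K : Fin N → Fin M → ℝ) (hK : ∀ i j, 0 < K i j)
    (p : Fin N → ℝ) (q : Fin M → ℝ) (hp : ∀ i, 0 < p i) (hq : ∀ j, 0 < q j)
    (hpq : ∑ i : Fin N, p i = ∑ j : Fin M, q j)
    (C : Fin N → Fin M → ℝ) (ε : ℝ) :
    (∃ (a : Fin N → ℝ) (b : Fin M → ℝ), (∀ i, 0 < a i) ∧ (∀ j, 0 < b j) ∧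
      (∀ i : Fin N, ∑ j : Fin M, a i * b j * K i j = p i) ∧
      (∀ j : Fin M, ∑ i : Fin N, a i * b j * K i j = q j)) ∧
    (∃ (a : Fin N → ℝ) (b : Fin M → ℝ), (∀ i, 0 < a i) ∧ (∀ j, 0 < b j) ∧
      (fun (i : Fin N) (j : Fin M) => a i * b j * Real.exp (-(C i j) / ε)) ∈
        transportPolytope N M) := by
  refine ⟨exists_pos_scaling_marginals hK hp hq hpq, ?_⟩
  have huniform : ∀ n : ℕ, 0 < n → ∑ _ : Fin n, 1 / (n : ℝ) = 1 := fun n hn => by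
    simp [hn.ne']
  obtain ⟨a, b, ha, hb, hrow, hcol⟩ := exists_pos_scaling_marginals
    (K := fun i j => exp (-C i j / ε)) (fun _ _ => exp_pos _)
    (p := fun _ => 1 / (N : ℝ)) (q := fun _ => 1 / (M : ℝ))
    (fun _ => by positivity) (fun _ => by positivity) (by rw [huniform N hN, huniform M hM])
  exact ⟨a, b, ha, hb, fun i j => by have := ha i; have := hb j; positivity, hrow, hcol⟩

/-- Sinkhorn scaling: for a strictly positive matrix `K` and strictly positive marginals
`p`, `q` with equal total mass, there exist strictly positive scaling vectors `a`, `b`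
such that `t_{i,j} = a_i b_j k_{i,j}` has row marginals `p` and column marginals `q`.
In particular, for `k_{i,j} = exp(-c_{i,j}/ε)`, `p_i = 1/N`, `q_j = 1/M`, there is a plan
of the form `t_{i,j} = a_i b_j exp(-c_{i,j}/ε)` lying in `Π(N,M)`. -/
theorem sinkhorn_scaling (N M : ℕ) (hN : 0 < N) (hM : 0 < M)
    (K : Fin N → Fin M → ℝ) (hK : ∀ i j, 0 < K i j)
    (p : Fin N → ℝ) (q : Fin M → ℝ) (hp : ∀ i, 0 < p i) (hq : ∀ j, 0 < q j)
    (hpq : ∑ i : Fin N, p i = ∑ j : Fin M, q j)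
    (C : Fin N → Fin M → ℝ) (ε : ℝ) (hε : 0 < ε) :
    (∃ (a : Fin N → ℝ) (b : Fin M → ℝ), (∀ i, 0 < a i) ∧ (∀ j, 0 < b j) ∧
      (∀ i : Fin N, ∑ j : Fin M, a i * b j * K i j = p i) ∧
      (∀ j : Fin M, ∑ i : Fin N, a i * b j * K i j = q j)) ∧
    (∃ (a : Fin N → ℝ) (b : Fin M → ℝ), (∀ i, 0 < a i) ∧ (∀ j, 0 < b j) ∧
      (fun (i : Fin N) (j : Fin M) => a i * b j * Real.exp (-(C i j) / ε)) ∈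
        transportPolytope N M) :=
  sinkhorn_scaling_general N M hN hM K hK p q hp hq hpq C ε
end

section
/- Let N and M be positive integers, C ∈ ℝ^{N×M} a cost matrix, and ε > 0. Suppose T* ∈ ℝ^{N×M} has entries t*_{i,j} = a_i b_j exp(−c_{i,j}/ε) for some strictly positive vectors a ∈ ℝ^{N}, b ∈ ℝ^{M}, and suppose T* lies in the transportation polytope Π(N,M). Then T* minimizes the entropic objective F(T) = ⟨T,C⟩ + ε ∑_{i,j} t_{i,j} log t_{i,j} over all entrywise strictly positive matrices T ∈ Π(N,M), i.e., F(T*) ≤ F(T) for every entrywise positive T ∈ Π(N,M). -/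
/-- The entropic objective `F(T) = ⟨T,C⟩ + ε ∑_{i,j} t_{i,j} log t_{i,j}`. -/
noncomputable def entropicObjective (N M : ℕ) (C : Fin N → Fin M → ℝ) (ε : ℝ)
    (T : Fin N → Fin M → ℝ) : ℝ :=
  (∑ i : Fin N, ∑ j : Fin M, T i j * C i j) +
    ε * ∑ i : Fin N, ∑ j : Fin M, T i j * Real.log (T i j)


/-!
Since `ε log t*_{ij} = ε log a_i + ε log b_j - c_{ij}`, the quantity `⟨T,C⟩ + ε ∑ t_{ij} log t*_{ij}`
depends only on the row and column sums of `T`, so it is constant on `Π(N,M)`. Hence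
`F(T) - F(T*) = ε ∑ t_{ij} (log t_{ij} - log t*_{ij})`, the Kullback–Leibler divergence of `T`
from `T*`; both have the same total mass, so it is nonnegative by Gibbs' inequality.
-/

open Real Finset

theorem Real.sub_le_mul_log_div {t s : ℝ} (ht : 0 < t) (hs : 0 < s) :
    t - s ≤ t * log (t / s) := by
  have h := one_sub_inv_le_log_of_pos (div_pos ht hs)
  rw [inv_div] at h
  calc t - s = t * (1 - s / t) := by field_simp
    _ ≤ t * log (t / s) := mul_le_mul_of_nonneg_left h ht.le

theorem Real.sum_mul_log_le_sum_mul_log {α : Type*} [Fintype α] {p q : α → ℝ}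
    (hp : ∀ x, 0 < p x) (hq : ∀ x, 0 < q x) (hpq : ∑ x, p x = ∑ x, q x) :
    ∑ x, p x * log (q x) ≤ ∑ x, p x * log (p x) := by
  rw [← sub_nonneg, ← sum_sub_distrib]
  calc (0 : ℝ) = ∑ x, (p x - q x) := by rw [sum_sub_distrib, hpq, sub_self]
    _ ≤ ∑ x, (p x * log (p x) - p x * log (q x)) := sum_le_sum fun x _ => by
      rw [← mul_sub, ← log_div (hp x).ne' (hq x).ne']
      exact sub_le_mul_log_div (hp x) (hq x)

theorem sum_sum_mul_add_mul_log_sinkhorn_eq {ι κ : Type*} [Fintype ι] [Fintype κ]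
    (C : ι → κ → ℝ) {ε : ℝ} (hε : ε ≠ 0) {a : ι → ℝ} {b : κ → ℝ}
    (ha : ∀ i, 0 < a i) (hb : ∀ j, 0 < b j) (T : ι → κ → ℝ) :
    ∑ i, ∑ j, T i j * C i j + ε * ∑ i, ∑ j, T i j * log (a i * b j * exp (-C i j / ε)) =
      ε * (∑ i, (∑ j, T i j) * log (a i) + ∑ j, (∑ i, T i j) * log (b j)) := by
  have hpt : ∀ i j, T i j * C i j + ε * (T i j * log (a i * b j * exp (-C i j / ε))) =
      ε * (T i j * log (a i)) + ε * (T i j * log (b j)) := fun i j => by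
    rw [log_mul (mul_pos (ha i) (hb j)).ne' (exp_pos _).ne', log_mul (ha i).ne' (hb j).ne',
      log_exp]
    field_simp
    ring
  simp only [mul_sum, ← sum_add_distrib, hpt, sum_mul]
  rw [sum_comm (f := fun j i => T i j * log (b j))]
  simp only [sum_add_distrib, mul_add, mul_sum]

theorem sinkhorn_form_minimizes_entropic_general (N M : ℕ)
    (C : Fin N → Fin M → ℝ) (ε : ℝ) (hε : 0 < ε)
    (a : Fin N → ℝ) (b : Fin M → ℝ) (ha : ∀ i, 0 < a i) (hb : ∀ j, 0 < b j)
    (Tstar : Fin N → Fin M → ℝ)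
    (hT : ∀ i j, Tstar i j = a i * b j * Real.exp (-(C i j) / ε))
    (hmem : Tstar ∈ transportPolytope N M) :
    ∀ T ∈ transportPolytope N M, (∀ i j, 0 < T i j) →
      entropicObjective N M C ε Tstar ≤ entropicObjective N M C ε T := by
  rintro T ⟨-, hrow, hcol⟩ hpos
  obtain ⟨-, hrow', hcol'⟩ := hmem
  have hpos' : ∀ i j, 0 < Tstar i j := fun i j => by
    rw [hT]; exact mul_pos (mul_pos (ha i) (hb j)) (exp_pos _)
  have hgibbs : ∑ i, ∑ j, T i j * log (Tstar i j) ≤ ∑ i, ∑ j, T i j * log (T i j) := by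
    have h := sum_mul_log_le_sum_mul_log (p := fun x : Fin N × Fin M => T x.1 x.2)
      (q := fun x => Tstar x.1 x.2) (fun x => hpos x.1 x.2) (fun x => hpos' x.1 x.2)
      (by simp only [Fintype.sum_prod_type', hrow, hrow'])
    simpa only [Fintype.sum_prod_type] using h
  have hcross := sum_sum_mul_add_mul_log_sinkhorn_eq C hε.ne' ha hb T
  have hcross' := sum_sum_mul_add_mul_log_sinkhorn_eq C hε.ne' ha hb Tstar
  simp only [← hT, hrow, hcol, hrow', hcol'] at hcross hcross'
  unfold entropicObjective
  linarith [mul_le_mul_of_nonneg_left hgibbs hε.le]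

/-- If `T*` has entries `t*_{i,j} = a_i b_j exp(-c_{i,j}/ε)` for strictly positive vectors
`a`, `b` and lies in `Π(N,M)`, then `T*` minimizes the entropic objective over all
entrywise strictly positive matrices in `Π(N,M)`. -/
theorem sinkhorn_form_minimizes_entropic (N M : ℕ) (hN : 0 < N) (hM : 0 < M)
    (C : Fin N → Fin M → ℝ) (ε : ℝ) (hε : 0 < ε)
    (a : Fin N → ℝ) (b : Fin M → ℝ) (ha : ∀ i, 0 < a i) (hb : ∀ j, 0 < b j)
    (Tstar : Fin N → Fin M → ℝ)
    (hT : ∀ i j, Tstar i j = a i * b j * Real.exp (-(C i j) / ε))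
    (hmem : Tstar ∈ transportPolytope N M) :
    ∀ T ∈ transportPolytope N M, (∀ i j, 0 < T i j) →
      entropicObjective N M C ε Tstar ≤ entropicObjective N M C ε T :=
  sinkhorn_form_minimizes_entropic_general N M C ε hε a b ha hb Tstar hT hmem
end
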